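/- Let Ξ be a minimal and aperiodic right-infinite subshift over a finite alphabet with language ℒ. The map φ⁽¹⁾ : H̃⁽¹⁾ → H⁽¹⁾ is always surjective, and it is injective if and only if Ξ is right-special balanced. -/

import Mathlib

open scoped ENNReal Classical

noncomputable section

namespace Arx1111

variable {A : Type*}

/-! ### Words and infinite words -/

/-- The left shift on right-infinite words. -/
def shift (ξ : ℕ → A) : ℕ → A := fun n => ξ (n + 1)

/-- The finite word `u` occurs in the infinite word `ξ` at position `k`. -/
def FactorAt (u : List A) (ξ : ℕ → A) (k : ℕ) : Prop :=
  u = (List.range u.length).map fun i => ξ (k + i)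

/-- `u` is a factor of the infinite word `ξ`. -/
def IsFactorOf (u : List A) (ξ : ℕ → A) : Prop := ∃ k, FactorAt u ξ k

/-- `u` is a prefix of the infinite word `ξ`. -/
def PrefixOfInf (u : List A) (ξ : ℕ → A) : Prop := FactorAt u ξ 0

/-- `u` is a proper prefix of `v`. -/
def PPrefix (u v : List A) : Prop := u <+: v ∧ u ≠ v

/-- The `n`-th power `u^n` of a finite word `u`. -/
def wordPow (u : List A) : ℕ → List A
  | 0 => []
  | n + 1 => u ++ wordPow u n

/-- The language of a set of infinite words: all finite factors of its elements. -/
def language (Ξ : Set (ℕ → A)) : Set (List A) := {u | ∃ ξ ∈ Ξ, IsFactorOf u ξ}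

/-! ### Subshifts -/

/-- `Ξ` is a (right-infinite) subshift: nonempty, closed, shift-invariant. -/
structure IsSubshift [TopologicalSpace A] (Ξ : Set (ℕ → A)) : Prop where
  nonempty : Ξ.Nonempty
  isClosed : IsClosed Ξ
  shift_mem : ∀ ξ ∈ Ξ, shift ξ ∈ Ξ

/-- Minimality: every orbit is dense in `Ξ`. -/
def IsMinimal [TopologicalSpace A] (Ξ : Set (ℕ → A)) : Prop :=
  ∀ ξ ∈ Ξ, Ξ ⊆ closure (Set.range fun n => shift^[n] ξ)

/-- Aperiodicity. -/
def Aperiodic (Ξ : Set (ℕ → A)) : Prop :=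
  ∀ ξ ∈ Ξ, ∀ n : ℕ, shift^[n] ξ = ξ → n = 0

/-! ### Occurrences, complete first returns, privileged words -/

variable [DecidableEq A]

/-- The number of occurrences of `u` as a factor of `w`. -/
def occCount (u w : List A) : ℕ :=
  ((List.range (w.length + 1)).filter fun k => (w.drop k).take u.length == u).length

/-- `u'` is a complete first return to `u`: if `u` is empty, `u'` is a single letter;
otherwise `u` is a prefix and a suffix of `u'` and occurs exactly twice in `u'`. -/
def IsCFR (u u' : List A) : Prop :=
  if u = [] then u'.length = 1
  else u <+: u' ∧ u <:+ u' ∧ occCount u u' = 2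

/-- Privileged words of order `n`. -/
inductive PrivOrder : ℕ → List A → Prop where
  | zero : PrivOrder 0 []
  | succ {n : ℕ} {u u' : List A} : PrivOrder n u → IsCFR u u' → PrivOrder (n + 1) u'

/-- A word is privileged if it is privileged of some order. -/
def IsPrivileged (u : List A) : Prop := ∃ n, PrivOrder n u

/-- `u'` is a complete first return to `u` inside the language `L`. -/
def CFRin (L : Set (List A)) (u u' : List A) : Prop := u' ∈ L ∧ IsCFR u u'

/-- `u` is right-special for the language `L`. -/
def RightSpecial (L : Set (List A)) (u : List A) : Prop :=
  u ∈ L ∧ ∃ a b : A, a ≠ b ∧ u ++ [a] ∈ L ∧ u ++ [b] ∈ L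

/-- `a(v)`: number of one-letter right extensions of `v` in `L`, minus one. -/
def aext (L : Set (List A)) (v : List A) : ℕ := Nat.card {a : A // v ++ [a] ∈ L} - 1

/-- `ã(v)`: number of complete first returns to `v` in `L`, minus one, if `v` is
privileged, and `0` otherwise. -/
def atil (L : Set (List A)) (v : List A) : ℕ :=
  if IsPrivileged v then Nat.card {u' : List A // CFRin L v u'} - 1 else 0

/-- `S(u)`: right-special words `r` with `u ⪯ r ≺ u'` for some complete first return `u'`. -/
def Sset (L : Set (List A)) (u : List A) : Set (List A) :=
  {r | RightSpecial L r ∧ ∃ u', CFRin L u u' ∧ u <+: r ∧ PPrefix r u'}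

/-- Right-special balanced: between a privileged word and any of its complete first
returns there is exactly one right-special word. -/
def RSBalanced (L : Set (List A)) : Prop :=
  ∀ u, IsPrivileged u → u ∈ L → ∀ u', CFRin L u u' →
    ∃! r, RightSpecial L r ∧ u <+: r ∧ PPrefix r u'

/-- `r'` is the shortest right-special word having `r` as a proper prefix. -/
def IsShortestRSExt (L : Set (List A)) (r r' : List A) : Prop :=
  RightSpecial L r' ∧ PPrefix r r' ∧
    ∀ r'', RightSpecial L r'' → PPrefix r r'' → r'.length ≤ r''.length

/-- `r = φ⁽⁰⁾(u)`: `r` is the shortest right-special word having `u` as a prefix. -/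
def IsPhi0 (L : Set (List A)) (u r : List A) : Prop :=
  RightSpecial L r ∧ u <+: r ∧ ∀ r', RightSpecial L r' → u <+: r' → r.length ≤ r'.length

/-- `H⁽¹⁾`: pairs of distinct one-letter right extensions of a common word. -/
def H1 (L : Set (List A)) (v₁ v₂ : List A) : Prop :=
  v₁ ∈ L ∧ v₂ ∈ L ∧ v₁ ≠ v₂ ∧ ∃ (w : List A) (a b : A), v₁ = w ++ [a] ∧ v₂ = w ++ [b]

/-- `H̃⁽¹⁾`: pairs of distinct complete first returns to a common privileged word. -/
def TildeH1 (L : Set (List A)) (u₁ u₂ : List A) : Prop :=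
  u₁ ≠ u₂ ∧ ∃ u, IsPrivileged u ∧ CFRin L u u₁ ∧ CFRin L u u₂

/-- Length of the longest common prefix of two finite words. -/
def lcpLenW (u v : List A) : ℕ := sSup {n | n ≤ u.length ∧ u.take n = v.take n}

/-- Length of the longest common privileged prefix of two finite words. -/
def weeLenW (u v : List A) : ℕ :=
  sSup {n | ∃ w : List A, IsPrivileged w ∧ w.length = n ∧ w <+: u ∧ w <+: v}

/-- `φ⁽¹⁾`: the pair of one-letter extensions of `u₁ ∧ u₂` which are prefixes of
`u₁` resp. `u₂`. -/
def phi1 (u₁ u₂ : List A) : List A × List A :=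
  (u₁.take (lcpLenW u₁ u₂ + 1), u₂.take (lcpLenW u₁ u₂ + 1))

/-! ### Bounded powers and repulsiveness -/

/-- Bounded powers: there is `p` such that no `(p+1)`-th power of a nonempty word
belongs to `L`. -/
def BoundedPowers (L : Set (List A)) : Prop :=
  ∃ p : ℕ, ∀ u ∈ L, u ≠ [] → wordPow u (p + 1) ∉ L

/-- The set of ratios `(|W|-|w|)/|w|` over words `w, W ∈ L` with `w` a nonempty proper
prefix and a suffix of `W`. -/
def repulsionSet (L : Set (List A)) : Set ℝ :=
  {x | ∃ w W : List A, w ∈ L ∧ W ∈ L ∧ w ≠ [] ∧ PPrefix w W ∧ w <:+ W ∧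
        x = ((W.length : ℝ) - (w.length : ℝ)) / (w.length : ℝ)}

/-- The index of repulsiveness `ℓ`. -/
def repulsionIndex (L : Set (List A)) : ℝ := sInf (repulsionSet L)

/-- Repulsive: `ℓ > 0`. -/
def Repulsive (L : Set (List A)) : Prop := 0 < repulsionIndex L

/-! ### Privileged prefixes of infinite words -/

/-- The `n`-th privileged prefix `ξ̃ₙ` of an infinite word `ξ`. -/
def privPrefix (ξ : ℕ → A) : ℕ → List A
  | 0 => []
  | n + 1 =>
    if h : ∃ u', IsCFR (privPrefix ξ n) u' ∧ PrefixOfInf u' ξ then h.choose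
    else privPrefix ξ n

/-- The order `ind(ξ ⩏ η)` of the longest common privileged prefix of two infinite
words; the word `ξ ⩏ η` itself is `privPrefix ξ (weeInd ξ η)`. -/
def weeInd (ξ η : ℕ → A) : ℕ := sSup {n | privPrefix ξ n = privPrefix η n}

/-- Length of the longest common prefix `ξ ∧ η` of two distinct infinite words. -/
def lcpLenInf (ξ η : ℕ → A) : ℕ := sInf {n | ξ n ≠ η n}

/-! ### Choice functions, weight functions and the metrics -/

/-- A choice function for `Ξ`. -/
def IsChoiceFun (Ξ : Set (ℕ → A)) (τ : List A → ℕ → A) : Prop :=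
  (∀ v ∈ language Ξ, τ v ∈ Ξ ∧ PrefixOfInf v (τ v)) ∧
  (∀ v ∈ language Ξ, ∀ w ∈ language Ξ, v.length < w.length →
    PrefixOfInf w (τ v) → τ w = τ v)

/-- A weight function. -/
structure IsWeight (δ : ℕ → ℝ) : Prop where
  pos : ∀ n, 0 < δ n
  strictAnti : StrictAnti δ
  tendsto_zero : Filter.Tendsto δ Filter.atTop (nhds 0)
  submul : ∃ c : ℝ, 0 < c ∧ ∀ a b : ℕ, δ (a * b) ≤ c * δ a * δ b
  doubling : ∃ c : ℝ, 0 < c ∧ ∀ a : ℕ, c * δ a ≤ δ (2 * a)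

variable [TopologicalSpace A]

/-- The metric `d_τ` associated to the right-special horizontal edges. -/
def dTau (Ξ : Set (ℕ → A)) (δ : ℕ → ℝ) (τ : List A → ℕ → A) (ξ η : ℕ → A) : ℝ≥0∞ :=
  ⨆ f : {f : (ℕ → A) → ℝ // ContinuousOn f Ξ ∧
      ∀ v₁ v₂, H1 (language Ξ) v₁ v₂ → |f (τ v₁) - f (τ v₂)| ≤ δ (lcpLenW v₁ v₂)},
    ENNReal.ofReal |f.1 ξ - f.1 η|

/-- The metric `d̃_τ` associated to the privileged horizontal edges. -/
def dTilTau (Ξ : Set (ℕ → A)) (δ : ℕ → ℝ) (τ : List A → ℕ → A) (ξ η : ℕ → A) : ℝ≥0∞ :=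
  ⨆ f : {f : (ℕ → A) → ℝ // ContinuousOn f Ξ ∧
      ∀ u₁ u₂, TildeH1 (language Ξ) u₁ u₂ → |f (τ u₁) - f (τ u₂)| ≤ δ (weeLenW u₁ u₂)},
    ENNReal.ofReal |f.1 ξ - f.1 η|

/-- `d_inf`. -/
def dInf (Ξ : Set (ℕ → A)) (δ : ℕ → ℝ) (ξ η : ℕ → A) : ℝ≥0∞ :=
  ⨅ τ : {τ // IsChoiceFun Ξ τ}, dTau Ξ δ τ.1 ξ η

/-- `d_sup`. -/
def dSup (Ξ : Set (ℕ → A)) (δ : ℕ → ℝ) (ξ η : ℕ → A) : ℝ≥0∞ :=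
  ⨆ τ : {τ // IsChoiceFun Ξ τ}, dTau Ξ δ τ.1 ξ η

/-- `d̃_inf`. -/
def dTilInf (Ξ : Set (ℕ → A)) (δ : ℕ → ℝ) (ξ η : ℕ → A) : ℝ≥0∞ :=
  ⨅ τ : {τ // IsChoiceFun Ξ τ}, dTilTau Ξ δ τ.1 ξ η

/-- `d̃_sup`. -/
def dTilSup (Ξ : Set (ℕ → A)) (δ : ℕ → ℝ) (ξ η : ℕ → A) : ℝ≥0∞ :=
  ⨆ τ : {τ // IsChoiceFun Ξ τ}, dTilTau Ξ δ τ.1 ξ η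

/-- `β̃_τ(ξ̃ₙ)`: equals `1` if the longest common privileged prefix of `τ(ξ̃ₙ)` and `ξ`
is `ξ̃ₙ`, and `0` otherwise. -/
def btil (τ : List A → ℕ → A) (ξ : ℕ → A) (n : ℕ) : ℝ≥0∞ :=
  if privPrefix (τ (privPrefix ξ n)) (weeInd (τ (privPrefix ξ n)) ξ) = privPrefix ξ n
  then 1 else 0

/-! ### Zeta functions -/

/-- `ζ_k(s)` (with the convention `0⁰ = 0`). -/
def zeta (L : Set (List A)) (δ : ℕ → ℝ) (k : ℕ) (s : ℝ) : ℝ≥0∞ :=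
  ∑' v : L, (if aext L (v : List A) = 0 then 0 else ((aext L (v : List A) : ℝ≥0∞)) ^ k) *
    ENNReal.ofReal (δ (v : List A).length ^ s)

/-- `ζ̃_k(s)` (with the convention `0⁰ = 0`). -/
def zetaTil (L : Set (List A)) (δ : ℕ → ℝ) (k : ℕ) (s : ℝ) : ℝ≥0∞ :=
  ∑' v : L, (if atil L (v : List A) = 0 then 0 else ((atil L (v : List A) : ℝ≥0∞)) ^ k) *
    ENNReal.ofReal (δ (v : List A).length ^ s)

/-- Almost finite privileged rank. -/
def AlmostFiniteRank (L : Set (List A)) : Prop :=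
  ∃ a b : ℝ, 0 < a ∧ 0 < b ∧ ∀ u, IsPrivileged u → u ∈ L → 2 ≤ u.length →
    (Nat.card {u' : List A // CFRin L u u'} : ℝ) ≤ a * (Real.log u.length) ^ b

end Arx1111

/-!
Two distinct complete first returns `u₁, u₂` to a privileged word `u` are not prefixes of one
another, so they agree up to some `r ⪰ u` and then read letters `a ≠ b`; thus `r` is
right-special and `φ⁽¹⁾(u₁, u₂) = (r a, r b)`.

Surjectivity: for a right-special `w` with extensions `w a`, `w b`, a longest privileged prefix
`u` of `w` occurs in `w` only once, so by minimality `w a` and `w b` extend to complete first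
returns to `u`.

Injectivity from balance: `φ⁽¹⁾(u₁, u₂) = (r a, r b)` determines `r`. It determines `u`: a
privileged prefix of a privileged word is also a suffix of it, so of two privileged prefixes
`u ≺ w` of `r` the shorter would occur strictly inside its return. And a complete first return
to `u` is determined by its unique right-special prefix `r ⪰ u` and the letter after it.

Balance from injectivity: by aperiodicity `u` has a second complete first return, which yields
a right-special word between `u` and `u'`. If there were two, `r₁ ≺ r₂`, leaving `u'` right
after `r₂` gives a return `y ≠ u'`, and leaving it right after `r₁` a return `z` with
`φ⁽¹⁾(u', z) = φ⁽¹⁾(y, z)`.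
-/

namespace Arx1111

variable {A : Type*}

section Words

def OccursAt (u w : List A) (j : ℕ) : Prop := u <+: w.drop j

theorem occursAt_zero_iff {u w : List A} : OccursAt u w 0 ↔ u <+: w := by
  simp [OccursAt]

theorem OccursAt.add_length_le {u w : List A} {j : ℕ} (hu : u ≠ []) (h : OccursAt u w j) :
    j + u.length ≤ w.length := by
  have hlen := h.length_le
  have : 0 < u.length := List.length_pos_iff.mpr hu
  simp only [List.length_drop] at hlen
  omega

theorem occursAt_of_isSuffix {u w : List A} (h : u <:+ w) :
    OccursAt u w (w.length - u.length) := by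
  obtain ⟨t, rfl⟩ := h
  simp [OccursAt]

theorem isSuffix_of_occursAt {u w : List A} (h : OccursAt u w (w.length - u.length)) :
    u <:+ w := by
  have hlen := h.length_le
  simp only [List.length_drop] at hlen
  rw [h.eq_of_length (by simp; omega)]
  exact List.drop_suffix _ _

theorem OccursAt.of_isPrefix {u w W : List A} {j : ℕ} (h : OccursAt u w j) (hW : w <+: W) :
    OccursAt u W j :=
  h.trans (hW.drop j)

theorem OccursAt.take {u w : List A} {j n : ℕ} (h : OccursAt u w j) (hn : j + u.length ≤ n) :
    OccursAt u (w.take n) j := by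
  rw [OccursAt, List.drop_take, List.prefix_take_iff]
  exact ⟨h, by omega⟩

theorem eq_of_append_singleton_isPrefix {r x : List A} {a b : A} (ha : r ++ [a] <+: x)
    (hb : r ++ [b] <+: x) : a = b :=
  (List.append_singleton_inj.mp ((List.prefix_of_prefix_length_le ha hb (by simp)).eq_of_length
    (by simp))).2

theorem pprefix_of_append_singleton_isPrefix {r x : List A} {a : A} (h : r ++ [a] <+: x) :
    PPrefix r x :=
  ⟨(List.prefix_append r [a]).trans h, by rintro rfl; simpa using h.length_le⟩

theorem take_succ_of_append_singleton_isPrefix {r x : List A} {a : A} (h : r ++ [a] <+: x) :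
    x.take (r.length + 1) = r ++ [a] := by
  simpa using (List.prefix_iff_eq_take.mp h).symm

theorem isPrefix_append_getElem {r x : List A} (h : r <+: x) (hlt : r.length < x.length) :
    r ++ [x[r.length]] <+: x := by
  obtain ⟨_ | ⟨c, t⟩, rfl⟩ := h
  · simp at hlt
  · simp

theorem exists_branch_of_not_isPrefix :
    ∀ {x y : List A}, ¬ x <+: y → ¬ y <+: x →
      ∃ r a b, a ≠ b ∧ r ++ [a] <+: x ∧ r ++ [b] <+: y
  | [], _, hxy, _ => absurd List.nil_prefix hxy
  | _ :: _, [], _, hyx => absurd List.nil_prefix hyx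
  | c :: x, d :: y, hxy, hyx => by
    by_cases hcd : c = d
    · subst hcd
      obtain ⟨r, a, b, hab, ha, hb⟩ :=
        exists_branch_of_not_isPrefix (x := x) (y := y) (by simpa using hxy) (by simpa using hyx)
      exact ⟨c :: r, a, b, hab, by simpa using ha, by simpa using hb⟩
    · exact ⟨[], c, d, hcd, by simp, by simp⟩

theorem lcpLenW_eq_of_branch {r x y : List A} {a b : A} (hab : a ≠ b) (ha : r ++ [a] <+: x)
    (hb : r ++ [b] <+: y) : lcpLenW x y = r.length := by
  have hxr : x.take r.length = r := by
    rw [List.prefix_iff_eq_take.mp ((List.prefix_append r [a]).trans ha)]; simp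
  have hyr : y.take r.length = r := by
    rw [List.prefix_iff_eq_take.mp ((List.prefix_append r [b]).trans hb)]; simp
  refine IsGreatest.csSup_eq ⟨⟨by simpa using ha.length_le.trans' (by simp), hxr.trans hyr.symm⟩,
    fun n ⟨_, hn⟩ => ?_⟩
  by_contra! hlt
  have htake := congrArg (List.take (r.length + 1)) hn
  simp only [List.take_take, min_eq_left (Nat.succ_le_of_lt hlt)] at htake
  rw [take_succ_of_append_singleton_isPrefix ha, take_succ_of_append_singleton_isPrefix hb] at htake
  exact hab (List.append_singleton_inj.mp htake).2

theorem phi1_eq_of_branch {r x y : List A} {a b : A} (hab : a ≠ b) (ha : r ++ [a] <+: x)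
    (hb : r ++ [b] <+: y) : phi1 x y = (r ++ [a], r ++ [b]) := by
  rw [phi1, lcpLenW_eq_of_branch hab ha hb, take_succ_of_append_singleton_isPrefix ha,
    take_succ_of_append_singleton_isPrefix hb]

def IsPrefixClosed (L : Set (List A)) : Prop := ∀ x ∈ L, ∀ v, v <+: x → v ∈ L

section Language

variable {L : Set (List A)}

theorem RightSpecial.exists_ne {r : List A} (hr : RightSpecial L r) (c : A) :
    ∃ b, b ≠ c ∧ r ++ [b] ∈ L := by
  obtain ⟨_, a, b, hab, ha, hb⟩ := hr
  by_cases hac : a = c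
  · exact ⟨b, hac ▸ hab.symm, hb⟩
  · exact ⟨a, hac, ha⟩

theorem rightSpecial_of_branch (hL : IsPrefixClosed L) {r x y : List A}
    {a b : A} (hx : x ∈ L) (hy : y ∈ L)
    (hab : a ≠ b) (ha : r ++ [a] <+: x) (hb : r ++ [b] <+: y) : RightSpecial L r :=
  ⟨hL x hx r ((List.prefix_append r [a]).trans ha), a, b, hab, hL x hx _ ha, hL y hy _ hb⟩

end Language

variable [DecidableEq A]

theorem occCount_eq_card (u w : List A) :
    occCount u w = ((Finset.range (w.length + 1)).filter (OccursAt u w)).card := by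
  rw [occCount, Finset.card_def, Finset.filter_val, Finset.range_val, Multiset.range,
    Multiset.filter_coe, Multiset.coe_card]
  congr 2
  funext k
  rw [Bool.eq_iff_iff, beq_iff_eq, decide_eq_true_iff, OccursAt, List.prefix_iff_eq_take, eq_comm]

theorem isCFR_nil_iff {w : List A} : IsCFR [] w ↔ w.length = 1 := by
  simp [IsCFR]

theorem isCFR_iff {u w : List A} (hu : u ≠ []) :
    IsCFR u w ↔ u <+: w ∧ u <:+ w ∧ u.length < w.length ∧
      ∀ j, OccursAt u w j → j = 0 ∨ j = w.length - u.length := by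
  rw [IsCFR, if_neg hu, occCount_eq_card]
  set S := (Finset.range (w.length + 1)).filter (OccursAt u w)
  have hS : ∀ j, j ∈ S ↔ OccursAt u w j := fun j => by
    simp only [S, Finset.mem_filter, Finset.mem_range, and_iff_right_iff_imp]
    intro hj
    have := hj.add_length_le hu
    omega
  refine and_congr_right fun hpre => and_congr_right fun hsuf => ?_
  have hends : {0, w.length - u.length} ⊆ S := by
    intro j hj
    rw [Finset.mem_insert, Finset.mem_singleton] at hj
    rcases hj with rfl | rfl
    · exact (hS 0).mpr (occursAt_zero_iff.mpr hpre)
    · exact (hS _).mpr (occursAt_of_isSuffix hsuf)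
  have hpos : 0 < u.length := List.length_pos_iff.mpr hu
  constructor
  · intro hcard
    have hlt : u.length < w.length := by
      by_contra hle
      have : S ⊆ {0} := fun j hj => by
        have := ((hS j).mp hj).add_length_le hu
        rw [Finset.mem_singleton]
        omega
      have := Finset.card_le_card this
      rw [Finset.card_singleton] at this
      omega
    have hcard₂ : ({0, w.length - u.length} : Finset ℕ).card = 2 :=
      Finset.card_pair (by omega)
    have hSeq := (Finset.eq_of_subset_of_card_le hends (by omega)).symm
    refine ⟨hlt, fun j hj => ?_⟩
    simpa [hSeq] using (hS j).mpr hj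
  · rintro ⟨hlt, hocc⟩
    have : S = {0, w.length - u.length} := by
      refine Finset.Subset.antisymm (fun j hj => ?_) hends
      simpa using hocc j ((hS j).mp hj)
    rw [this, Finset.card_pair (by omega)]

namespace IsCFR

variable {u w : List A}

theorem isPrefix (h : IsCFR u w) : u <+: w := by
  by_cases hu : u = []
  · exact hu ▸ List.nil_prefix
  · exact ((isCFR_iff hu).mp h).1

theorem isSuffix (h : IsCFR u w) : u <:+ w := by
  by_cases hu : u = []
  · exact hu ▸ List.nil_suffix
  · exact ((isCFR_iff hu).mp h).2.1

theorem length_lt (h : IsCFR u w) : u.length < w.length := by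
  by_cases hu : u = []
  · subst hu
    simp [isCFR_nil_iff.mp h]
  · exact ((isCFR_iff hu).mp h).2.2.1

theorem occursAt (hu : u ≠ []) (h : IsCFR u w) {j : ℕ} (hj : OccursAt u w j) :
    j = 0 ∨ j = w.length - u.length :=
  ((isCFR_iff hu).mp h).2.2.2 j hj

theorem occursAt_eq_zero_of_pprefix (hu : u ≠ []) (h : IsCFR u w) {r : List A}
    (hr : PPrefix r w) {j : ℕ} (hj : OccursAt u r j) : j = 0 := by
  have hlt : r.length < w.length := hr.1.length_le.lt_of_ne (fun h' => hr.2 (hr.1.eq_of_length h'))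
  have := hj.add_length_le hu
  rcases h.occursAt hu (hj.of_isPrefix hr.1) with h0 | hend
  · exact h0
  · omega

theorem not_isPrefix {w' : List A} (h : IsCFR u w) (h' : IsCFR u w') (hne : w ≠ w') :
    ¬ w <+: w' := by
  intro hpre
  have hlen := h.length_lt
  have hlen' := h'.length_lt
  by_cases hu : u = []
  · subst hu
    exact hne (hpre.eq_of_length (by rw [isCFR_nil_iff.mp h, isCFR_nil_iff.mp h']))
  · have hlt : w.length < w'.length :=
      hpre.length_le.lt_of_ne fun hl => hne (hpre.eq_of_length hl)
    rcases h'.occursAt hu ((occursAt_of_isSuffix h.isSuffix).of_isPrefix hpre) with h0 | hend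
      <;> omega

theorem exists_branch {w' : List A} (h : IsCFR u w) (h' : IsCFR u w') (hne : w ≠ w') :
    ∃ r a b, a ≠ b ∧ u <+: r ∧ r ++ [a] <+: w ∧ r ++ [b] <+: w' := by
  obtain ⟨r, a, b, hab, ha, hb⟩ :=
    exists_branch_of_not_isPrefix (h.not_isPrefix h' hne) (h'.not_isPrefix h hne.symm)
  refine ⟨r, a, b, hab, ?_, ha, hb⟩
  by_contra hur
  have hlen : (r ++ [a]).length ≤ u.length := by
    have := mt (List.prefix_of_prefix_length_le h.isPrefix
      ((List.prefix_append r [a]).trans ha)) hur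
    simp only [List.length_append, List.length_singleton]
    omega
  exact hab (eq_of_append_singleton_isPrefix
    (List.prefix_of_prefix_length_le ha h.isPrefix hlen)
    (List.prefix_of_prefix_length_le hb h'.isPrefix (by simpa using hlen)))

theorem isPrefix_of_occursAt {v : List A} (h : IsCFR u w)
    (hvw : v <+: w ∨ w <+: v) (hocc : ∀ j, OccursAt u v j → j = 0 ∨ j = v.length - u.length) :
    v <+: w := by
  rcases hvw with hvw | hwv
  · exact hvw
  · have hlen := h.length_lt
    have hle : v.length ≤ w.length := by
      by_contra hlt
      rcases hocc _ ((occursAt_of_isSuffix h.isSuffix).of_isPrefix hwv) <;> omega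
    rw [(hwv.eq_of_length (le_antisymm hwv.length_le hle)).symm]

end IsCFR

theorem exists_isCFR_isPrefix {u w : List A} (hu : u ≠ []) (hpre : u <+: w) {j : ℕ}
    (hj : OccursAt u w j) (hj0 : 0 < j) : ∃ u', IsCFR u u' ∧ u' <+: w := by
  classical
  have hex : ∃ k, 0 < k ∧ OccursAt u w k := ⟨j, hj0, hj⟩
  obtain ⟨hk0, hk⟩ := Nat.find_spec hex
  set k := Nat.find hex
  have hkw := hk.add_length_le hu
  refine ⟨w.take (k + u.length), ?_, List.take_prefix _ _⟩
  have hlen : (w.take (k + u.length)).length = k + u.length := by simp; omega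
  rw [isCFR_iff hu]
  refine ⟨List.prefix_take_iff.mpr ⟨hpre, by omega⟩,
    isSuffix_of_occursAt (by rw [hlen, Nat.add_sub_cancel]; exact hk.take le_rfl),
    by omega, fun i hi => ?_⟩
  have hik := hi.add_length_le hu
  rcases Nat.eq_zero_or_pos i with hi0 | hi0
  · exact Or.inl hi0
  · have := Nat.find_min' hex ⟨hi0, hi.of_isPrefix (List.take_prefix _ _)⟩
    right
    omega

namespace IsPrivileged

theorem nil : IsPrivileged ([] : List A) := ⟨0, .zero⟩

theorem of_isCFR {u w : List A} (hu : IsPrivileged u) (h : IsCFR u w) : IsPrivileged w :=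
  let ⟨n, hn⟩ := hu
  ⟨n + 1, .succ hn h⟩

theorem singleton (a : A) : IsPrivileged [a] :=
  nil.of_isCFR (isCFR_nil_iff.mpr rfl)

theorem exists_isCFR {w : List A} (hw : IsPrivileged w) (hne : w ≠ []) :
    ∃ p, IsPrivileged p ∧ IsCFR p w := by
  obtain ⟨n, hn⟩ := hw
  cases hn with
  | zero => exact absurd rfl hne
  | succ hp hcfr => exact ⟨_, ⟨_, hp⟩, hcfr⟩

/-- Write `w` as a complete first return to a privileged `p`. A privileged `u` with
`p ≺ u ≺ w` would, by induction, end with `p`: an occurrence of `p` strictly inside `w`. -/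
theorem isSuffix_of_isPrefix {u w : List A} (hw : IsPrivileged w) (hu : IsPrivileged u)
    (hpre : u <+: w) : u <:+ w := by
  induction hlen : w.length using Nat.strong_induction_on generalizing u w with
  | _ n ih =>
    by_cases huw : u = w
    · exact huw ▸ List.suffix_refl _
    have hult : u.length < w.length := hpre.length_le.lt_of_ne fun h => huw (hpre.eq_of_length h)
    obtain ⟨p, hp, hpw⟩ := hw.exists_isCFR (List.ne_nil_of_length_pos (by omega))
    have hpw_lt := hpw.length_lt
    rcases le_or_gt u.length p.length with hle | hlt
    · exact (ih p.length (by omega) hp hu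
        (List.prefix_of_prefix_length_le hpre hpw.isPrefix hle) rfl).trans hpw.isSuffix
    · have hpu : p <+: u := List.prefix_of_prefix_length_le hpw.isPrefix hpre hlt.le
      have hp0 : p ≠ [] := by
        rintro rfl
        rw [isCFR_nil_iff] at hpw
        omega
      have hocc := (occursAt_of_isSuffix (ih u.length (by omega) hu hp hpu rfl)).of_isPrefix hpre
      rcases hpw.occursAt hp0 hocc with h | h <;> omega

theorem eq_of_isPrefix {u w x : List A} (hu : IsPrivileged u) (hw : IsPrivileged w)
    (hx : IsCFR u x) (huw : u <+: w) (hwx : w <+: x) (hlt : w.length < x.length) : u = w := by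
  by_contra hne
  have hult : u.length < w.length := huw.length_le.lt_of_ne fun h => hne (huw.eq_of_length h)
  have hu0 : u ≠ [] := by
    rintro rfl
    rw [isCFR_nil_iff] at hx
    omega
  rcases hx.occursAt hu0 ((occursAt_of_isSuffix (hw.isSuffix_of_isPrefix hu huw)).of_isPrefix hwx)
    with h | h <;> omega

end IsPrivileged

/-- A second occurrence of `u` in `w` yields a longer privileged prefix of `w`, a complete
first return to `u`. -/
theorem exists_isPrivileged_isPrefix_occursAt_eq_zero {u w : List A} (hu : IsPrivileged u)
    (hu0 : u ≠ []) (hpre : u <+: w) :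
    ∃ v, IsPrivileged v ∧ v ≠ [] ∧ v <+: w ∧ ∀ j, OccursAt v w j → j = 0 := by
  induction hn : w.length - u.length using Nat.strong_induction_on generalizing u with
  | _ n ih =>
    by_cases honce : ∀ j, OccursAt u w j → j = 0
    · exact ⟨u, hu, hu0, hpre, honce⟩
    push Not at honce
    obtain ⟨j, hj, hj0⟩ := honce
    obtain ⟨u', hu', hpre'⟩ := exists_isCFR_isPrefix hu0 hpre hj (Nat.pos_of_ne_zero hj0)
    have := hu'.length_lt
    have := hpre'.length_le
    exact ih _ (by omega) (hu.of_isCFR hu') (List.ne_nil_of_length_pos (by omega)) hpre' rfl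

section Language

variable {L : Set (List A)}

theorem RSBalanced.cfrIn_eq (hL : IsPrefixClosed L) (hbal : RSBalanced L)
    {u x x' r : List A} {a : A} (hu : IsPrivileged u) (hx : CFRin L u x) (hx' : CFRin L u x')
    (hr : RightSpecial L r) (hur : u <+: r) (ha : r ++ [a] <+: x) (ha' : r ++ [a] <+: x') :
    x = x' := by
  by_contra hne
  obtain ⟨r', b, b', hbb', hur', hb, hb'⟩ := hx.2.exists_branch hx'.2 hne
  obtain ⟨_, _, huniq⟩ := hbal u hu (hL x hx.1 u hx.2.isPrefix) x hx
  have hrr' : r = r' :=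
    (huniq r ⟨hr, hur, pprefix_of_append_singleton_isPrefix ha⟩).trans
      (huniq r' ⟨rightSpecial_of_branch hL hx.1 hx'.1 hbb' hb hb', hur',
        pprefix_of_append_singleton_isPrefix hb⟩).symm
  subst hrr'
  exact hbb' ((eq_of_append_singleton_isPrefix hb ha).trans
    (eq_of_append_singleton_isPrefix ha' hb'))

theorem phi1_injective_of_rsBalanced (hL : IsPrefixClosed L) (hbal : RSBalanced L)
    {u₁ u₂ w₁ w₂ : List A} (hu : TildeH1 L u₁ u₂) (hw : TildeH1 L w₁ w₂)
    (heq : phi1 u₁ u₂ = phi1 w₁ w₂) :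
    (u₁, u₂) = (w₁, w₂) := by
  obtain ⟨hne, u, hu, hu₁, hu₂⟩ := hu
  obtain ⟨hne', w, hw, hw₁, hw₂⟩ := hw
  obtain ⟨r, a, b, hab, hur, ha, hb⟩ := hu₁.2.exists_branch hu₂.2 hne
  obtain ⟨r', a', b', hab', hwr, ha', hb'⟩ := hw₁.2.exists_branch hw₂.2 hne'
  rw [phi1_eq_of_branch hab ha hb, phi1_eq_of_branch hab' ha' hb', Prod.mk.injEq,
    List.append_singleton_inj, List.append_singleton_inj] at heq
  obtain ⟨⟨rfl, rfl⟩, -, rfl⟩ := heq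
  have hlt₁ : r.length < u₁.length := by simpa using ha.length_le
  have hlt₁' : r.length < w₁.length := by simpa using ha'.length_le
  have huw : u = w := by
    rcases List.prefix_or_prefix_of_prefix hur hwr with h | h
    · exact hu.eq_of_isPrefix hw hu₁.2 h (hwr.trans ((List.prefix_append r [a]).trans ha))
        (lt_of_le_of_lt hwr.length_le hlt₁)
    · exact (hw.eq_of_isPrefix hu hw₁.2 h (hur.trans ((List.prefix_append r [a]).trans ha'))
        (lt_of_le_of_lt hur.length_le hlt₁')).symm
  subst huw
  have hr := rightSpecial_of_branch hL hu₁.1 hu₂.1 hab ha hb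
  rw [hbal.cfrIn_eq hL hu hu₁ hw₁ hr hur ha ha',
    hbal.cfrIn_eq hL hu hu₂ hw₂ hr hur hb hb']

end Language

end Words

section InfiniteWords

variable {u v w : List A} {ξ : ℕ → A} {k : ℕ}

theorem FactorAt.getElem (h : FactorAt u ξ k) {i : ℕ} (hi : i < u.length) :
    u[i] = ξ (k + i) := by
  rw [List.getElem_of_eq h hi]
  simp

theorem factorAt_of_getElem (h : ∀ i (hi : i < u.length), u[i] = ξ (k + i)) :
    FactorAt u ξ k :=
  List.ext_getElem (by simp) fun i hi _ => by simpa using h i hi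

theorem FactorAt.of_isPrefix (h : FactorAt u ξ k) (hv : v <+: u) : FactorAt v ξ k :=
  factorAt_of_getElem fun i hi => by
    rw [hv.getElem hi]
    exact h.getElem _

theorem FactorAt.of_occursAt {j : ℕ} (h : FactorAt w ξ k) (hu : OccursAt u w j) :
    FactorAt u ξ (k + j) :=
  factorAt_of_getElem fun i hi => by
    have hlen := hu.length_le
    rw [hu.getElem hi, List.getElem_drop, h.getElem, Nat.add_assoc]

theorem iterate_shift_apply (ξ : ℕ → A) (k n : ℕ) : shift^[k] ξ n = ξ (k + n) := by
  induction k generalizing ξ with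
  | zero => simp
  | succ k ih =>
    rw [Function.iterate_succ_apply, ih, shift]
    congr 1
    omega

theorem factorAt_iff_prefixOfInf_iterate_shift :
    FactorAt u ξ k ↔ PrefixOfInf u (shift^[k] ξ) := by
  simp [PrefixOfInf, FactorAt, iterate_shift_apply]

theorem prefixOfInf_map_range (ξ : ℕ → A) (n : ℕ) : PrefixOfInf ((List.range n).map ξ) ξ := by
  simp [PrefixOfInf, FactorAt]

theorem PrefixOfInf.isPrefix_of_length_le (hv : PrefixOfInf v ξ) (hw : PrefixOfInf w ξ)
    (hle : v.length ≤ w.length) : v <+: w := by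
  rw [List.prefix_iff_eq_take]
  exact List.ext_getElem (by simp [hle]) fun i hi _ => by
    rw [List.getElem_take, hv.getElem hi, hw.getElem]

theorem PrefixOfInf.isPrefix_or_isPrefix (hv : PrefixOfInf v ξ) (hw : PrefixOfInf w ξ) :
    v <+: w ∨ w <+: v :=
  (le_total v.length w.length).imp (hv.isPrefix_of_length_le hw) (hw.isPrefix_of_length_le hv)

theorem PrefixOfInf.occursAt (hw : PrefixOfInf w ξ) (hu : FactorAt u ξ k)
    (hle : k + u.length ≤ w.length) : OccursAt u w k := by
  rw [OccursAt, List.prefix_iff_eq_take]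
  exact List.ext_getElem (by simp; omega) fun i hi _ => by
    rw [List.getElem_take, List.getElem_drop, hu.getElem hi, hw.getElem, Nat.zero_add]

theorem mem_language_of_factorAt {Ξ : Set (ℕ → A)} (hξ : ξ ∈ Ξ) (h : FactorAt u ξ k) :
    u ∈ language Ξ :=
  ⟨ξ, hξ, k, h⟩

theorem isPrefixClosed_language (Ξ : Set (ℕ → A)) : IsPrefixClosed (language Ξ) :=
  fun _ ⟨_, hξ, _, hk⟩ _ hv => mem_language_of_factorAt hξ (hk.of_isPrefix hv)

section Subshift

variable [TopologicalSpace A] {Ξ : Set (ℕ → A)}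

theorem IsSubshift.iterate_shift_mem (hΞ : IsSubshift Ξ) (hξ : ξ ∈ Ξ) (k : ℕ) :
    shift^[k] ξ ∈ Ξ := by
  induction k with
  | zero => exact hξ
  | succ k ih =>
    rw [Function.iterate_succ_apply']
    exact hΞ.shift_mem _ ih

theorem IsSubshift.exists_prefixOfInf (hΞ : IsSubshift Ξ) (hu : u ∈ language Ξ) :
    ∃ ξ ∈ Ξ, PrefixOfInf u ξ :=
  let ⟨ξ, hξ, k, hk⟩ := hu
  ⟨shift^[k] ξ, hΞ.iterate_shift_mem hξ k, factorAt_iff_prefixOfInf_iterate_shift.mp hk⟩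

theorem IsMinimal.exists_pos_factorAt [DiscreteTopology A] (hΞ : IsSubshift Ξ)
    (hmin : IsMinimal Ξ) (hξ : ξ ∈ Ξ) (hu : u ∈ language Ξ) : ∃ k, 0 < k ∧ FactorAt u ξ k := by
  obtain ⟨ζ, hζ, j, hj⟩ := hu
  have hopen : IsOpen ((Set.Iio (j + u.length)).pi fun i => ({ζ i} : Set A)) :=
    isOpen_set_pi (Set.finite_Iio _) fun _ _ => isOpen_discrete _
  obtain ⟨_, hn, n, rfl⟩ := mem_closure_iff.mp (hmin _ (hΞ.shift_mem ξ hξ) hζ) _ hopen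
    fun _ _ => rfl
  refine ⟨n + 1 + j, by omega, factorAt_of_getElem fun i hi => ?_⟩
  have := hn (j + i) (Set.mem_Iio.mpr (by omega))
  simp only [Set.mem_singleton_iff, iterate_shift_apply, shift] at this
  rw [hj.getElem hi, ← this]
  congr 1
  omega

/-- `ξ` reads `u'` at every multiple of `|u'| - |u|`. -/
theorem IsSubshift.iterate_shift_eq_self (hΞ : IsSubshift Ξ) {u' : List A} (hξ : ξ ∈ Ξ)
    (hpre : PrefixOfInf u ξ) (hsuf : u <:+ u')
    (h : ∀ η ∈ Ξ, PrefixOfInf u η → PrefixOfInf u' η) :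
    shift^[u'.length - u.length] ξ = ξ := by
  set p := u'.length - u.length
  have hfac : ∀ m, FactorAt u' ξ (m * p) := by
    intro m
    induction m with
    | zero => exact (Nat.zero_mul p).symm ▸ h ξ hξ hpre
    | succ m ih =>
      have hu : FactorAt u ξ (m * p + p) := ih.of_occursAt (occursAt_of_isSuffix hsuf)
      rw [Nat.succ_mul, factorAt_iff_prefixOfInf_iterate_shift]
      exact h _ (hΞ.iterate_shift_mem hξ _) (factorAt_iff_prefixOfInf_iterate_shift.mp hu)
  rcases Nat.eq_zero_or_pos p with hp | hp
  · rw [hp, Function.iterate_zero, id]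
  funext n
  have hr : n % p < u'.length := (Nat.mod_lt n hp).trans_le (Nat.sub_le _ _)
  rw [iterate_shift_apply, ← Nat.div_add_mod n p, ← Nat.add_assoc, Nat.add_comm p,
    Nat.mul_comm, ← Nat.succ_mul, ← (hfac _).getElem hr, (hfac _).getElem hr]

variable [DecidableEq A] [DiscreteTopology A]

theorem exists_cfrIn_prefixOfInf (hΞ : IsSubshift Ξ) (hmin : IsMinimal Ξ)
    (hξ : ξ ∈ Ξ) (hu : u ≠ []) (hpre : PrefixOfInf u ξ) :
    ∃ x, CFRin (language Ξ) u x ∧ PrefixOfInf x ξ := by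
  obtain ⟨k, hk0, hk⟩ := hmin.exists_pos_factorAt hΞ hξ (mem_language_of_factorAt hξ hpre)
  set w := (List.range (k + u.length)).map ξ
  have hw : PrefixOfInf w ξ := prefixOfInf_map_range ξ _
  obtain ⟨x, hx, hxw⟩ := exists_isCFR_isPrefix hu
    (hpre.isPrefix_of_length_le hw (by simp [w])) (hw.occursAt hk (by simp [w])) hk0
  have hxξ : PrefixOfInf x ξ := hw.of_isPrefix hxw
  exact ⟨x, ⟨mem_language_of_factorAt hξ hxξ, hx⟩, hxξ⟩

/-- `u` occurs in `r ++ [b]` only at its two ends, so the first return to `u` along an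
infinite extension of `r ++ [b]` extends `r ++ [b]`. -/
theorem exists_cfrIn_of_occursAt_eq_zero (hΞ : IsSubshift Ξ)
    (hmin : IsMinimal Ξ) {r : List A} {b : A} (hu : u ≠ []) (hur : u <+: r)
    (hocc : ∀ j, OccursAt u r j → j = 0) (hb : r ++ [b] ∈ language Ξ) :
    ∃ x, CFRin (language Ξ) u x ∧ r ++ [b] <+: x := by
  obtain ⟨ξ, hξ, hrb⟩ := hΞ.exists_prefixOfInf hb
  obtain ⟨x, hx, hxξ⟩ := exists_cfrIn_prefixOfInf hΞ hmin hξ hu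
    (hrb.of_isPrefix (hur.trans (List.prefix_append r [b])))
  refine ⟨x, hx, hx.2.isPrefix_of_occursAt (hrb.isPrefix_or_isPrefix hxξ) fun j hj => ?_⟩
  have hj' := hj.add_length_le hu
  simp only [List.length_append, List.length_singleton] at hj' ⊢
  by_cases hjr : j + u.length ≤ r.length
  · exact Or.inl (hocc j (by simpa using hj.take hjr))
  · exact Or.inr (by omega)

theorem exists_cfrIn_ne (hΞ : IsSubshift Ξ) (hmin : IsMinimal Ξ)
    (hap : Aperiodic Ξ) {x : List A} (hu : u ∈ language Ξ) (hx : CFRin (language Ξ) u x) :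
    ∃ y, CFRin (language Ξ) u y ∧ y ≠ x := by
  by_cases hu0 : u = []
  · subst hu0
    obtain ⟨ξ, hξ⟩ := hΞ.nonempty
    have hletter : ∀ n, CFRin (language Ξ) [] [ξ n] := fun n =>
      ⟨mem_language_of_factorAt (k := n) hξ (factorAt_of_getElem fun i hi => by
        simp only [List.length_singleton, Nat.lt_one_iff] at hi
        simp [hi]), isCFR_nil_iff.mpr rfl⟩
    obtain ⟨n, hn⟩ : ∃ n, ξ (n + 1) ≠ ξ n := by
      by_contra! hconst
      exact one_ne_zero (hap ξ hξ 1 (funext fun n => hconst n))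
    by_cases hxn : [ξ n] = x
    · exact ⟨[ξ (n + 1)], hletter _, fun h => hn (List.singleton_inj.mp (h.trans hxn.symm))⟩
    · exact ⟨[ξ n], hletter n, hxn⟩
  · by_contra! honly
    obtain ⟨ξ, hξ, hpre⟩ := hΞ.exists_prefixOfInf hu
    have hper := hΞ.iterate_shift_eq_self hξ hpre hx.2.isSuffix fun η hη hηu => by
      obtain ⟨y, hy, hyη⟩ := exists_cfrIn_prefixOfInf hΞ hmin hη hu0 hηu
      exact honly y hy ▸ hyη
    have := hap ξ hξ _ hper
    have := hx.2.length_lt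
    omega

theorem phi1_surjective (hΞ : IsSubshift Ξ) (hmin : IsMinimal Ξ)
    {v₁ v₂ : List A} (h : H1 (language Ξ) v₁ v₂) :
    ∃ u₁ u₂, TildeH1 (language Ξ) u₁ u₂ ∧ phi1 u₁ u₂ = (v₁, v₂) := by
  obtain ⟨hv₁, hv₂, hne, w, a, b, rfl, rfl⟩ := h
  have hab : a ≠ b := fun h => hne (h ▸ rfl)
  rcases w with _ | ⟨c, t⟩
  · exact ⟨[a], [b], ⟨by simpa using hab, [], .nil, ⟨hv₁, isCFR_nil_iff.mpr rfl⟩,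
      ⟨hv₂, isCFR_nil_iff.mpr rfl⟩⟩, phi1_eq_of_branch hab (by simp) (by simp)⟩
  obtain ⟨u, hu, hu0, huw, hocc⟩ := exists_isPrivileged_isPrefix_occursAt_eq_zero
    (IsPrivileged.singleton c) (List.cons_ne_nil _ _) ⟨t, rfl⟩
  obtain ⟨u₁, hu₁, ha⟩ := exists_cfrIn_of_occursAt_eq_zero hΞ hmin hu0 huw hocc hv₁
  obtain ⟨u₂, hu₂, hb⟩ := exists_cfrIn_of_occursAt_eq_zero hΞ hmin hu0 huw hocc hv₂
  refine ⟨u₁, u₂, ⟨?_, u, hu, hu₁, hu₂⟩, phi1_eq_of_branch hab ha hb⟩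
  rintro rfl
  exact hab (eq_of_append_singleton_isPrefix ha hb)

theorem exists_phi1_eq_of_pprefix (hΞ : IsSubshift Ξ) (hmin : IsMinimal Ξ)
    {u u' r₁ r₂ : List A} (hu : IsPrivileged u) (hu' : CFRin (language Ξ) u u')
    (hr₁ : RightSpecial (language Ξ) r₁) (hur₁ : u <+: r₁) (hr₁₂ : PPrefix r₁ r₂)
    (hr₂ : RightSpecial (language Ξ) r₂) (hr₂u' : PPrefix r₂ u') :
    ∃ y z, TildeH1 (language Ξ) u' z ∧ TildeH1 (language Ξ) y z ∧
      phi1 u' z = phi1 y z ∧ u' ≠ y := by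
  have hlt₁₂ := hr₁₂.1.length_le.lt_of_ne fun h => hr₁₂.2 (hr₁₂.1.eq_of_length h)
  have hlt₂ := hr₂u'.1.length_le.lt_of_ne fun h => hr₂u'.2 (hr₂u'.1.eq_of_length h)
  have hu0 : u ≠ [] := by
    rintro rfl
    have := isCFR_nil_iff.mp hu'.2
    omega
  have hr₁u' : PPrefix r₁ u' := ⟨hr₁₂.1.trans hr₂u'.1, by rintro rfl; omega⟩
  have hc₂ := isPrefix_append_getElem hr₂u'.1 hlt₂
  have hc₁ : r₁ ++ [u'[r₁.length]] <+: r₂ :=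
    List.prefix_of_prefix_length_le (isPrefix_append_getElem hr₁u'.1 (by omega)) hr₂u'.1
      (by simpa using hlt₁₂)
  obtain ⟨b₁, hb₁, hb₁L⟩ := hr₁.exists_ne u'[r₁.length]
  obtain ⟨b₂, hb₂, hb₂L⟩ := hr₂.exists_ne u'[r₂.length]
  obtain ⟨z, hz, hzb⟩ := exists_cfrIn_of_occursAt_eq_zero hΞ hmin hu0 hur₁
    (fun _ => hu'.2.occursAt_eq_zero_of_pprefix hu0 hr₁u') hb₁L
  obtain ⟨y, hy, hyb⟩ := exists_cfrIn_of_occursAt_eq_zero hΞ hmin hu0 (hur₁.trans hr₁₂.1)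
    (fun _ => hu'.2.occursAt_eq_zero_of_pprefix hu0 hr₂u') hb₂L
  have hcy := hc₁.trans ((List.prefix_append r₂ [b₂]).trans hyb)
  refine ⟨y, z, ⟨?_, u, hu, hu', hz⟩, ⟨?_, u, hu, hy, hz⟩, ?_, ?_⟩
  · rintro rfl
    exact hb₁ (eq_of_append_singleton_isPrefix hzb (hc₁.trans hr₂u'.1))
  · rintro rfl
    exact hb₁ (eq_of_append_singleton_isPrefix hzb hcy)
  · rw [phi1_eq_of_branch hb₁.symm (hc₁.trans hr₂u'.1) hzb, phi1_eq_of_branch hb₁.symm hcy hzb]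
  · rintro rfl
    exact hb₂ (eq_of_append_singleton_isPrefix hyb hc₂)

theorem rsBalanced_of_phi1_injective (hΞ : IsSubshift Ξ)
    (hmin : IsMinimal Ξ) (hap : Aperiodic Ξ)
    (hinj : ∀ u₁ u₂ w₁ w₂, TildeH1 (language Ξ) u₁ u₂ → TildeH1 (language Ξ) w₁ w₂ →
      phi1 u₁ u₂ = phi1 w₁ w₂ → (u₁, u₂) = (w₁, w₂)) :
    RSBalanced (language Ξ) := by
  intro u hu huL u' hu'
  have hnot : ∀ r₁ r₂, RightSpecial (language Ξ) r₁ → u <+: r₁ → PPrefix r₁ r₂ →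
      RightSpecial (language Ξ) r₂ → PPrefix r₂ u' → False :=
    fun r₁ r₂ hr₁ hur₁ hr₁₂ hr₂ hr₂u' => by
      obtain ⟨y, z, hu'z, hyz, heq, hne⟩ :=
        exists_phi1_eq_of_pprefix hΞ hmin hu hu' hr₁ hur₁ hr₁₂ hr₂ hr₂u'
      exact hne (Prod.mk.inj (hinj _ _ _ _ hu'z hyz heq)).1
  obtain ⟨u'', hu'', hne⟩ := exists_cfrIn_ne hΞ hmin hap huL hu'
  obtain ⟨r, a, b, hab, hur, ha, hb⟩ := hu'.2.exists_branch hu''.2 hne.symm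
  have hr := rightSpecial_of_branch (isPrefixClosed_language Ξ) hu'.1 hu''.1 hab ha hb
  have hru' := pprefix_of_append_singleton_isPrefix ha
  refine ⟨r, ⟨hr, hur, hru'⟩, fun r' ⟨hr', hur', hr'u'⟩ => ?_⟩
  by_contra hne'
  rcases List.prefix_or_prefix_of_prefix hr'u'.1 hru'.1 with h | h
  · exact hnot r' r hr' hur' ⟨h, hne'⟩ hr hru'
  · exact hnot r r' hr hur ⟨h, Ne.symm hne'⟩ hr' hr'u'

end Subshift

end InfiniteWords

theorem statement9_general {A : Type*} [DecidableEq A] [TopologicalSpace A]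
    [DiscreteTopology A] (Ξ : Set (ℕ → A)) (hΞ : IsSubshift Ξ) (hmin : IsMinimal Ξ)
    (hap : Aperiodic Ξ) :
    (∀ v₁ v₂, H1 (language Ξ) v₁ v₂ →
        ∃ u₁ u₂, TildeH1 (language Ξ) u₁ u₂ ∧ phi1 u₁ u₂ = (v₁, v₂)) ∧
      ((∀ u₁ u₂ w₁ w₂, TildeH1 (language Ξ) u₁ u₂ → TildeH1 (language Ξ) w₁ w₂ →
          phi1 u₁ u₂ = phi1 w₁ w₂ → (u₁, u₂) = (w₁, w₂)) ↔
        RSBalanced (language Ξ)) :=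
  ⟨fun _ _ => phi1_surjective hΞ hmin, ⟨rsBalanced_of_phi1_injective hΞ hmin hap,
    fun hbal _ _ _ _ => phi1_injective_of_rsBalanced (isPrefixClosed_language Ξ) hbal⟩⟩

/-- The map `φ⁽¹⁾ : H̃⁽¹⁾ → H⁽¹⁾` is always surjective, and it is
injective if and only if the subshift is right-special balanced. -/
theorem statement9 {A : Type*} [Fintype A] [DecidableEq A] [TopologicalSpace A]
    [DiscreteTopology A] (Ξ : Set (ℕ → A)) (hΞ : IsSubshift Ξ) (hmin : IsMinimal Ξ)
    (hap : Aperiodic Ξ) :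
    (∀ v₁ v₂, H1 (language Ξ) v₁ v₂ →
        ∃ u₁ u₂, TildeH1 (language Ξ) u₁ u₂ ∧ phi1 u₁ u₂ = (v₁, v₂)) ∧
      ((∀ u₁ u₂ w₁ w₂, TildeH1 (language Ξ) u₁ u₂ → TildeH1 (language Ξ) w₁ w₂ →
          phi1 u₁ u₂ = phi1 w₁ w₂ → (u₁, u₂) = (w₁, w₂)) ↔
        RSBalanced (language Ξ)) :=
  statement9_general Ξ hΞ hmin hap

end Arx1111
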